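/- arXiv:2407.12635 — 4 statements merged into one kernel-verified Lean document; each statement's English description precedes it below -/
import Mathlib

section
/- A square dual quaternion matrix R is unitary if and only if its dual complex adjoint matrix J(R) is unitary. -/
noncomputable section
open Matrix

abbrev Quat := Quaternion ℝ
abbrev DQ := DualNumber Quat
abbrev DC := DualNumber ℂ

/-- Embedding of a complex number as a quaternion (spanned by 1, i). -/
def toQuat (z : ℂ) : Quat := ⟨z.re, z.im, 0, 0⟩
/-- The quaternion unit j. -/
def jq : Quat := ⟨0, 0, 1, 0⟩
/-- First complex component of a quaternion q = c₁ + c₂ j. -/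
def qc1 (q : Quat) : ℂ := ⟨q.re, q.imI⟩
/-- Second complex component of a quaternion q = c₁ + c₂ j. -/
def qc2 (q : Quat) : ℂ := ⟨q.imJ, q.imK⟩
/-- Embedding of a dual complex number as a dual quaternion. -/
def toDQ (z : DC) : DQ := ⟨toQuat z.fst, toQuat z.snd⟩
/-- Conjugate of a dual quaternion: p̂* = p_st* + p_I* ε. -/
def dconj (p : DQ) : DQ := ⟨star p.fst, star p.snd⟩
/-- Conjugate of a dual complex number (complex conjugation of both parts). -/
def dcconj (z : DC) : DC := ⟨(starRingEnd ℂ) z.fst, (starRingEnd ℂ) z.snd⟩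
/-- The dual quaternion c₁ + c₂ j + (c₃ + c₄ j)ε built from four complex numbers. -/
def mkDQ (a b c d : ℂ) : DQ := ⟨toQuat a + toQuat b * jq, toQuat c + toQuat d * jq⟩

/-- The complex adjoint matrix of a quaternion matrix. -/
def adjC {m n : ℕ} (A : Matrix (Fin m) (Fin n) Quat) :
    Matrix (Fin m ⊕ Fin m) (Fin n ⊕ Fin n) ℂ :=
  Matrix.fromBlocks (A.map qc1) (A.map qc2)
    (-(A.map fun q => (starRingEnd ℂ) (qc2 q))) (A.map fun q => (starRingEnd ℂ) (qc1 q))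

/-- The dual complex adjoint matrix J of a dual quaternion matrix. -/
def Jmap {m n : ℕ} (Q : Matrix (Fin m) (Fin n) DQ) :
    Matrix (Fin m ⊕ Fin m) (Fin n ⊕ Fin n) DC :=
  fun i j => ⟨adjC (Q.map TrivSqZeroExt.fst) i j, adjC (Q.map TrivSqZeroExt.snd) i j⟩

/-- Conjugate transpose of a dual quaternion matrix. -/
def dqCT {m n : ℕ} (P : Matrix (Fin m) (Fin n) DQ) : Matrix (Fin n) (Fin m) DQ :=
  fun i j => dconj (P j i)

/-- Conjugate transpose of a dual complex matrix. -/
def dcCT {α β : Type} (P : Matrix α β DC) : Matrix β α DC :=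
  fun i j => dcconj (P j i)

/-! `J` is multiplicative, unital, injective and turns `dqCT` into `dcCT`; hence it carries
the equations `R* R = I` and `R R* = I` to the corresponding equations for `J(R)` and back.
Multiplicativity reduces to the complex adjoint `adjC` of quaternion matrices, applied to the
standard and infinitesimal parts separately: the ε-part of a product is `P₀ Q₁ + P₁ Q₀`, and
`adjC` is additive and multiplicative. -/

section DualMatrix

variable {R : Type*} {l m n : Type*}

lemma Matrix.ext_fst_snd {M : Type*} {P Q : Matrix m n (TrivSqZeroExt R M)}
    (hfst : P.map TrivSqZeroExt.fst = Q.map TrivSqZeroExt.fst)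
    (hsnd : P.map TrivSqZeroExt.snd = Q.map TrivSqZeroExt.snd) : P = Q :=
  Matrix.ext fun i j => TrivSqZeroExt.ext (congr_fun₂ hfst i j) (congr_fun₂ hsnd i j)

variable [Semiring R]

lemma Matrix.map_fst_mul [Fintype m] (P : Matrix l m (DualNumber R))
    (Q : Matrix m n (DualNumber R)) :
    (P * Q).map TrivSqZeroExt.fst = P.map TrivSqZeroExt.fst * Q.map TrivSqZeroExt.fst := by
  ext i j
  simp only [map_apply, mul_apply, TrivSqZeroExt.fst_sum, TrivSqZeroExt.fst_mul]

lemma Matrix.map_snd_mul [Fintype m] (P : Matrix l m (DualNumber R))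
    (Q : Matrix m n (DualNumber R)) :
    (P * Q).map TrivSqZeroExt.snd =
      P.map TrivSqZeroExt.fst * Q.map TrivSqZeroExt.snd +
        P.map TrivSqZeroExt.snd * Q.map TrivSqZeroExt.fst := by
  ext i j
  simp only [map_apply, add_apply, mul_apply, TrivSqZeroExt.snd_sum, DualNumber.snd_mul,
    Finset.sum_add_distrib]

variable [DecidableEq n]

lemma Matrix.map_fst_one : (1 : Matrix n n (DualNumber R)).map TrivSqZeroExt.fst = 1 :=
  Matrix.map_one _ rfl rfl

lemma Matrix.map_snd_one : (1 : Matrix n n (DualNumber R)).map TrivSqZeroExt.snd = 0 := by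
  ext i j
  by_cases h : i = j <;> simp [h]

end DualMatrix

lemma qc1_add (p q : Quat) : qc1 (p + q) = qc1 p + qc1 q := by
  apply Complex.ext <;> simp [qc1]

lemma qc2_add (p q : Quat) : qc2 (p + q) = qc2 p + qc2 q := by
  apply Complex.ext <;> simp [qc2]

lemma qc1_sum {ι : Type*} (s : Finset ι) (f : ι → Quat) :
    qc1 (∑ i ∈ s, f i) = ∑ i ∈ s, qc1 (f i) :=
  map_sum (AddMonoidHom.mk' qc1 qc1_add) f s

lemma qc2_sum {ι : Type*} (s : Finset ι) (f : ι → Quat) :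
    qc2 (∑ i ∈ s, f i) = ∑ i ∈ s, qc2 (f i) :=
  map_sum (AddMonoidHom.mk' qc2 qc2_add) f s

lemma qc1_zero : qc1 0 = 0 := by
  apply Complex.ext <;> rfl

lemma qc2_zero : qc2 0 = 0 := by
  apply Complex.ext <;> rfl

lemma qc1_one : qc1 1 = 1 := by
  apply Complex.ext <;> rfl

lemma qc2_one : qc2 1 = 0 := by
  apply Complex.ext <;> rfl

lemma qc1_mul (p q : Quat) : qc1 (p * q) = qc1 p * qc1 q - qc2 p * (starRingEnd ℂ) (qc2 q) := by
  apply Complex.ext <;> simp [qc1, qc2] <;> ring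

lemma qc2_mul (p q : Quat) : qc2 (p * q) = qc1 p * qc2 q + qc2 p * (starRingEnd ℂ) (qc1 q) := by
  apply Complex.ext <;> simp [qc1, qc2] <;> ring

lemma qc1_star (p : Quat) : qc1 (star p) = (starRingEnd ℂ) (qc1 p) := by
  apply Complex.ext <;> simp [qc1]

lemma qc2_star (p : Quat) : qc2 (star p) = -qc2 p := by
  apply Complex.ext <;> simp [qc2]

lemma qc_ext {p q : Quat} (h1 : qc1 p = qc1 q) (h2 : qc2 p = qc2 q) : p = q := by
  simp only [qc1, qc2, Complex.mk.injEq] at h1 h2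
  ext <;> tauto

section ComplexAdjoint

variable {m n p : ℕ}

lemma adjC_zero : adjC (0 : Matrix (Fin m) (Fin n) Quat) = 0 := by
  ext (i | i) (j | j) <;> simp [adjC, qc1_zero, qc2_zero]

lemma adjC_one : adjC (1 : Matrix (Fin n) (Fin n) Quat) = 1 := by
  ext (i | i) (j | j) <;>
    simp [adjC, one_apply, apply_ite qc2, qc1_one, qc2_one, qc1_zero, qc2_zero]

lemma adjC_add (A B : Matrix (Fin m) (Fin n) Quat) : adjC (A + B) = adjC A + adjC B := by
  ext (i | i) (j | j) <;> simp [adjC, qc1_add, qc2_add, add_comm]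

lemma adjC_mul (A : Matrix (Fin m) (Fin n) Quat) (B : Matrix (Fin n) (Fin p) Quat) :
    adjC (A * B) = adjC A * adjC B := by
  ext (i | i) (j | j) <;>
    simp only [adjC, mul_apply, Matrix.map_apply, fromBlocks_apply₁₁, fromBlocks_apply₁₂,
      fromBlocks_apply₂₁, fromBlocks_apply₂₂, Matrix.neg_apply, qc1_sum, qc2_sum, qc1_mul,
      qc2_mul, Fintype.sum_sum_type, map_sum, map_mul, map_sub, map_add,
      Complex.conj_conj, ← Finset.sum_add_distrib, ← Finset.sum_neg_distrib] <;>
    exact Finset.sum_congr rfl fun _ _ => by ring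

lemma adjC_conjTranspose (A : Matrix (Fin m) (Fin n) Quat) : adjC Aᴴ = (adjC A)ᴴ := by
  ext (i | i) (j | j) <;> simp [adjC, conjTranspose_apply, qc1_star, qc2_star]

lemma adjC_injective : Function.Injective (adjC : Matrix (Fin m) (Fin n) Quat → _) := by
  intro A B h
  refine Matrix.ext fun i j => ?_
  have h1 := congr_fun₂ h (Sum.inl i) (Sum.inl j)
  have h2 := congr_fun₂ h (Sum.inl i) (Sum.inr j)
  exact qc_ext (by simpa [adjC] using h1) (by simpa [adjC] using h2)

end ComplexAdjoint

section DualComplexAdjoint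

variable {m n p : ℕ}

lemma Jmap_map_fst (Q : Matrix (Fin m) (Fin n) DQ) :
    (Jmap Q).map TrivSqZeroExt.fst = adjC (Q.map TrivSqZeroExt.fst) :=
  rfl

lemma Jmap_map_snd (Q : Matrix (Fin m) (Fin n) DQ) :
    (Jmap Q).map TrivSqZeroExt.snd = adjC (Q.map TrivSqZeroExt.snd) :=
  rfl

lemma Jmap_one : Jmap (1 : Matrix (Fin n) (Fin n) DQ) = 1 :=
  Matrix.ext_fst_snd (by rw [Jmap_map_fst, map_fst_one, adjC_one, map_fst_one])
    (by rw [Jmap_map_snd, map_snd_one, adjC_zero, map_snd_one])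

lemma Jmap_mul (P : Matrix (Fin m) (Fin n) DQ) (Q : Matrix (Fin n) (Fin p) DQ) :
    Jmap (P * Q) = Jmap P * Jmap Q :=
  Matrix.ext_fst_snd (by simp only [Jmap_map_fst, map_fst_mul, adjC_mul])
    (by simp only [Jmap_map_fst, Jmap_map_snd, map_snd_mul, adjC_add, adjC_mul])

lemma Jmap_dqCT (P : Matrix (Fin m) (Fin n) DQ) : Jmap (dqCT P) = dcCT (Jmap P) :=
  Matrix.ext_fst_snd (adjC_conjTranspose (P.map TrivSqZeroExt.fst))
    (adjC_conjTranspose (P.map TrivSqZeroExt.snd))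

lemma Jmap_injective : Function.Injective (Jmap : Matrix (Fin m) (Fin n) DQ → _) :=
  fun P Q h => Matrix.ext_fst_snd
    (adjC_injective (by rw [← Jmap_map_fst, ← Jmap_map_fst, h]))
    (adjC_injective (by rw [← Jmap_map_snd, ← Jmap_map_snd, h]))

lemma Jmap_eq_one_iff {X : Matrix (Fin n) (Fin n) DQ} : Jmap X = 1 ↔ X = 1 := by
  rw [← Jmap_one, Jmap_injective.eq_iff]

end DualComplexAdjoint

theorem stmt5 {n : ℕ} (R : Matrix (Fin n) (Fin n) DQ) :
    (dqCT R * R = 1 ∧ R * dqCT R = 1) ↔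
      (dcCT (Jmap R) * Jmap R = 1 ∧ Jmap R * dcCT (Jmap R) = 1) := by
  simp only [← Jmap_dqCT, ← Jmap_mul, Jmap_eq_one_iff]
end
end

section
/- For any dual quaternion â, there exist a unit dual quaternion q̂ and a dual complex number λ̂ such that q̂* â q̂ = λ̂. (Every dual quaternion is similar via a unit dual quaternion to a dual complex number.) -/
noncomputable section
open Matrix

/-!
A unit quaternion `u` conjugates any quaternion `A` into `ℂ`: rotate `A.im` onto the `i`-axis.
Conjugating `â = A + Bε` by `u` makes its standard part complex. If that part `z` is real it
commutes with everything, and a second unit quaternion makes the dual part complex. Otherwise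
`z - conj z` is invertible, and conjugating by a unit `1 + wε` with `w ∈ ℂ j` removes the
`j`-component of the dual part.
-/

open Quaternion

@[simp] theorem toQuat_re (z : ℂ) : (toQuat z).re = z.re := rfl
@[simp] theorem toQuat_imI (z : ℂ) : (toQuat z).imI = z.im := rfl
@[simp] theorem toQuat_imJ (z : ℂ) : (toQuat z).imJ = 0 := rfl
@[simp] theorem toQuat_imK (z : ℂ) : (toQuat z).imK = 0 := rfl
@[simp] theorem jq_re : jq.re = 0 := rfl
@[simp] theorem jq_imI : jq.imI = 0 := rfl
@[simp] theorem jq_imJ : jq.imJ = 1 := rfl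
@[simp] theorem jq_imK : jq.imK = 0 := rfl

theorem norm_im_sq (A : Quat) : ‖A.im‖ ^ 2 = A.imI ^ 2 + A.imJ ^ 2 + A.imK ^ 2 := by
  rw [sq, ← normSq_eq_norm_mul_self, normSq_def']
  simp

/-- `A.im + ‖A.im‖ i` bisects `A.im` and `‖A.im‖ i`, so conjugating by it (a half-turn about the
bisector, up to scale) turns `A.im` into `‖A.im‖ i`. -/
theorem star_bisector_mul_mul_bisector (A : Quat) :
    star (A.im + toQuat ⟨0, ‖A.im‖⟩) * A * (A.im + toQuat ⟨0, ‖A.im‖⟩) =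
      normSq (A.im + toQuat ⟨0, ‖A.im‖⟩) • toQuat ⟨A.re, ‖A.im‖⟩ := by
  have hs := norm_im_sq A
  rw [normSq_def']
  ext <;> simp [re_mul, imI_mul, imJ_mul, imK_mul]
  · ring
  · linear_combination -(A.imI + ‖A.im‖) * hs
  · linear_combination -A.imJ * hs
  · linear_combination -A.imK * hs

theorem star_jq_mul_toQuat_mul_jq (z : ℂ) :
    star jq * toQuat z * jq = toQuat (starRingEnd ℂ z) := by
  ext <;> simp [re_mul, imI_mul, imJ_mul, imK_mul]

theorem star_jq_mul_jq : star jq * jq = 1 := by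
  ext <;> simp [re_mul, imI_mul, imJ_mul, imK_mul]

theorem exists_unit_conj_of_star_mul_mul_eq {A C u : Quat} (hu : u ≠ 0)
    (h : star u * A * u = normSq u • C) : ∃ v : Quat, star v * v = 1 ∧ star v * A * v = C := by
  set c := (√(normSq u))⁻¹
  have hc : c ^ 2 * normSq u = 1 := by
    rw [inv_pow, Real.sq_sqrt normSq_nonneg, inv_mul_cancel₀ (normSq_eq_zero.not.2 hu)]
  refine ⟨c • u, ?_, ?_⟩
  · rw [Quaternion.star_smul, smul_mul_smul_comm, star_mul_self, ← sq, ← coe_smul, smul_eq_mul,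
      hc, coe_one]
  · rw [Quaternion.star_smul, smul_mul_assoc, smul_mul_assoc, mul_smul_comm, h, smul_smul,
      smul_smul, ← sq, hc, one_smul]

theorem exists_unit_conj_eq_toQuat (A : Quat) :
    ∃ u : Quat, star u * u = 1 ∧ star u * A * u = toQuat ⟨A.re, ‖A.im‖⟩ := by
  by_cases hu : A.im + toQuat ⟨0, ‖A.im‖⟩ = 0
  · have hA : A = toQuat (starRingEnd ℂ ⟨A.re, ‖A.im‖⟩) := by
      conv_lhs => rw [← re_add_im A, eq_neg_of_add_eq_zero_left hu]
      ext <;> simp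
    refine ⟨jq, star_jq_mul_jq, ?_⟩
    conv_lhs => rw [hA, star_jq_mul_toQuat_mul_jq, Complex.conj_conj]
  · exact exists_unit_conj_of_star_mul_mul_eq hu (star_bisector_mul_mul_bisector A)

theorem star_mul_toQuat_mul_of_im_eq_zero {z : ℂ} (hz : z.im = 0) {u : Quat}
    (hu : star u * u = 1) : star u * toQuat z * u = toQuat z := by
  have hz' : toQuat z = (z.re : Quat) := by ext <;> simp [hz]
  rw [hz', ← coe_commutes, mul_assoc, hu, mul_one]

@[simp] theorem dconj_fst (p : DQ) : (dconj p).fst = star p.fst := rfl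
@[simp] theorem dconj_snd (p : DQ) : (dconj p).snd = star p.snd := rfl

theorem dconj_mul (p q : DQ) : dconj (p * q) = dconj q * dconj p := by
  ext <;> simp [TrivSqZeroExt.snd_mul, add_comm]

def UnitSimilar (a b : DQ) : Prop := ∃ q : DQ, dconj q * q = 1 ∧ dconj q * a * q = b

theorem UnitSimilar.trans {a b c : DQ} (hab : UnitSimilar a b) (hbc : UnitSimilar b c) :
    UnitSimilar a c := by
  obtain ⟨p, hp, rfl⟩ := hab
  obtain ⟨q, hq, rfl⟩ := hbc
  refine ⟨p * q, ?_, ?_⟩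
  · rw [dconj_mul, mul_assoc, ← mul_assoc (dconj p), hp, one_mul, hq]
  · simp only [dconj_mul, mul_assoc]

theorem unitSimilar_inl {u : Quat} (hu : star u * u = 1) (a : DQ) :
    UnitSimilar a ⟨star u * a.fst * u, star u * a.snd * u⟩ := by
  refine ⟨TrivSqZeroExt.inl u, ?_, ?_⟩ <;> refine TrivSqZeroExt.ext ?_ ?_ <;>
    simp [TrivSqZeroExt.snd_mul, hu, mul_assoc]

/-- Conjugation by `1 + wε` with `w = c j` adds `z w - w z = (z - conj z) c j` to the dual part,
since `j z = conj z j`; the choice of `c` cancels its `j`-component `qc2 a.snd`. -/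
theorem unitSimilar_of_im_ne_zero {a : DQ} {z : ℂ} (ha : a.fst = toQuat z) (hz : z.im ≠ 0) :
    UnitSimilar a ⟨toQuat z, toQuat (qc1 a.snd)⟩ := by
  refine ⟨1 + TrivSqZeroExt.inr (toQuat (Complex.I * qc2 a.snd / (2 * z.im)) * jq), ?_, ?_⟩ <;>
    refine TrivSqZeroExt.ext ?_ ?_ <;>
    simp [TrivSqZeroExt.snd_mul, ha]
  · ext <;> simp [re_mul, imI_mul, imJ_mul, imK_mul]
  · ext <;> simp [re_mul, imI_mul, imJ_mul, imK_mul, qc1, qc2, Complex.div_re, Complex.div_im] <;>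
      field_simp <;> ring

theorem stmt8 (a : DQ) :
    ∃ q : DQ, ∃ l : DC, dconj q * q = 1 ∧ dconj q * a * q = toDQ l := by
  suffices ∃ l : DC, UnitSimilar a (toDQ l) by
    obtain ⟨l, q, hq, hl⟩ := this
    exact ⟨q, l, hq, hl⟩
  obtain ⟨u, hu, hA⟩ := exists_unit_conj_eq_toQuat a.fst
  have h₁ := unitSimilar_inl hu a
  rw [hA] at h₁
  set z : ℂ := ⟨a.fst.re, ‖a.fst.im‖⟩
  set B := star u * a.snd * u
  by_cases hz : z.im = 0
  · obtain ⟨v, hv, hB⟩ := exists_unit_conj_eq_toQuat B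
    have h₂ := unitSimilar_inl hv ⟨toQuat z, B⟩
    rw [TrivSqZeroExt.fst_mk, TrivSqZeroExt.snd_mk, star_mul_toQuat_mul_of_im_eq_zero hz hv,
      hB] at h₂
    exact ⟨⟨z, _⟩, h₁.trans h₂⟩
  · exact ⟨⟨z, qc1 B⟩, h₁.trans (unitSimilar_of_im_ne_zero (a := ⟨toQuat z, B⟩) rfl hz)⟩
end
end

section
/- Let a, b ∈ ℂ and suppose there exist unit dual quaternions q̂, p̂ with (1 + aε) q̂ = p̂ (1 + bε). Then Re(a) = Re(b). -/
noncomputable section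
open Matrix

/-! By `(1 + aε) q̂ = p̂ (1 + bε)`, `q̂` and `p̂` share their standard part `u`, and the dual part of
`p̂` is expressed through that of `q̂`. Substituting it into the dual part of `p̂* p̂ = 1` and subtracting the
dual part of `q̂* q̂ = 1` leaves `u* (a + a*) u = b + b*`; as `a + a* = 2 Re a` is real, hence
central, and `u* u = 1`, this reads `2 Re a = 2 Re b`. -/

/-- The dual part of `(1 + Aε)(u + vε) = (u + wε)(1 + Bε)` between unit dual elements. -/
theorem star_mul_add_star_mul_eq_add_star_of_dual_unit {R : Type*} [Ring R] [StarRing R]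
    {u v w A B : R} (hu : star u * u = 1) (hv : star u * v + star v * u = 0)
    (hw : star u * w + star w * u = 0) (h : v + A * u = u * B + w) :
    star u * (A + star A) * u = B + star B := by
  obtain rfl : w = v + A * u - u * B := by rw [h]; abel
  have hexpand : star u * (v + A * u - u * B) + star (v + A * u - u * B) * u
      = (star u * v + star v * u) + star u * (A + star A) * u
        - star u * u * B - star B * (star u * u) := by
    simp only [star_sub, star_add, star_mul]
    noncomm_ring
  rw [hexpand, hv, hu, zero_add, one_mul, mul_one, sub_sub, sub_eq_zero] at hw
  exact hw

theorem DualNumber.one_add_inr_mul_eq_mul_one_add_inr_iff {R : Type*} [Ring R] (A B : R)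
    (q p : DualNumber R) :
    (1 + TrivSqZeroExt.inr A) * q = p * (1 + TrivSqZeroExt.inr B) ↔
      q.fst = p.fst ∧ q.snd + A * q.fst = p.fst * B + p.snd := by
  simp [TrivSqZeroExt.ext_iff]

theorem dconj_mul_self_eq_one_iff (q : DQ) :
    dconj q * q = 1 ↔ star q.fst * q.fst = 1 ∧ star q.fst * q.snd + star q.snd * q.fst = 0 := by
  rw [TrivSqZeroExt.ext_iff, TrivSqZeroExt.fst_mul, TrivSqZeroExt.snd_mul]
  simp [dconj]

theorem stmt12 (a b : ℂ) (q p : DQ) (hq : dconj q * q = 1) (hp : dconj p * p = 1)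
    (h : (1 + TrivSqZeroExt.inr (toQuat a)) * q = p * (1 + TrivSqZeroExt.inr (toQuat b))) :
    a.re = b.re := by
  obtain ⟨hq1, hq2⟩ := (dconj_mul_self_eq_one_iff q).1 hq
  obtain ⟨-, hp2⟩ := (dconj_mul_self_eq_one_iff p).1 hp
  obtain ⟨hfst, hsnd⟩ := (DualNumber.one_add_inr_mul_eq_mul_one_add_inr_iff _ _ q p).1 h
  rw [← hfst] at hp2 hsnd
  have key := star_mul_add_star_mul_eq_add_star_of_dual_unit hq1 hq2 hp2 hsnd
  rw [Quaternion.self_add_star', Quaternion.self_add_star', mul_assoc, Quaternion.coe_commutes,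
    ← mul_assoc, hq1, one_mul, Quaternion.coe_inj] at key
  simpa [toQuat] using key
end
end

section
/- With F and G defined on dual quaternion vectors by F(v) = [v1; −v̄2] + [v3; −v̄4]ε and G(v) = [v2; v̄1] + [v4; v̄3]ε (where v = v1 + v2 j + (v3 + v4 j)ε), if J(Q)F(v) = F(u) then also J(Q)G(v) = G(u). -/
noncomputable section
open Matrix

/-- The map F sending v₁ + v₂ j + (v₃ + v₄ j)ε to [v₁; -v̄2] + [v₃; -v̄4]ε. -/
def Fvec {n : ℕ} (v : Fin n → DQ) : Fin n ⊕ Fin n → DC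
  | .inl i => ⟨qc1 (v i).fst, qc1 (v i).snd⟩
  | .inr i => ⟨-(starRingEnd ℂ) (qc2 (v i).fst), -(starRingEnd ℂ) (qc2 (v i).snd)⟩

/-- The map G sending v₁ + v₂ j + (v₃ + v₄ j)ε to [v₂; v̄1] + [v₄; v̄3]ε. -/
def Gvec {n : ℕ} (v : Fin n → DQ) : Fin n ⊕ Fin n → DC
  | .inl i => ⟨qc2 (v i).fst, qc2 (v i).snd⟩
  | .inr i => ⟨(starRingEnd ℂ) (qc1 (v i).fst), (starRingEnd ℂ) (qc1 (v i).snd)⟩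

/-!
Over the dual complex numbers `J(Q)` has the quaternionic block shape `[[A, B], [-B̄, Ā]]`, and
every matrix of this shape commutes with the conjugate-linear map `S [x; y] = [-ȳ; x̄]`. Since
`G = S ∘ F`, applying `S` to `J(Q) F(v) = F(u)` gives `J(Q) G(v) = G(u)`.
-/

section ConjSwap

variable {R : Type*} [Ring R] {m n : Type*} (σ : R →+* R)

def conjSwap (x : n ⊕ n → R) : n ⊕ n → R :=
  Sum.elim (-(σ ∘ x ∘ Sum.inr)) (σ ∘ x ∘ Sum.inl)

theorem conjSwap_sumElim_neg (hσ : Function.Involutive σ) (x y : n → R) :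
    conjSwap σ (Sum.elim x (-(σ ∘ y))) = Sum.elim y (σ ∘ x) := by
  ext (i | i) <;> simp [conjSwap, hσ _]

theorem Matrix.fromBlocks_mulVec_conjSwap [Fintype n] (hσ : Function.Involutive σ)
    (A B : Matrix m n R) (x : n ⊕ n → R) :
    fromBlocks A B (-B.map σ) (A.map σ) *ᵥ conjSwap σ x
      = conjSwap σ (fromBlocks A B (-B.map σ) (A.map σ) *ᵥ x) := by
  have map_map_σ (M : Matrix m n R) : (M.map σ).map σ = M := by
    ext i j; exact hσ _
  ext (i | i) <;>
    simp only [fromBlocks_mulVec, conjSwap, Sum.elim_inl, Sum.elim_inr, Sum.elim_comp_inl,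
      Sum.elim_comp_inr, Function.comp_apply, Pi.add_apply, Pi.neg_apply, map_add, map_neg,
      RingHom.map_mulVec, neg_mulVec, mulVec_neg, map_map_σ] <;>
    abel

end ConjSwap

@[simp] theorem fst_dcconj (z : DC) : (dcconj z).fst = starRingEnd ℂ z.fst := rfl

@[simp] theorem snd_dcconj (z : DC) : (dcconj z).snd = starRingEnd ℂ z.snd := rfl

theorem dcconj_involutive : Function.Involutive dcconj := fun z => by ext <;> simp

def dcconjHom : DC →+* DC where
  toFun := dcconj
  map_one' := by ext <;> simp
  map_mul' a b := by ext <;> simp [TrivSqZeroExt.fst_mul, TrivSqZeroExt.snd_mul]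
  map_zero' := by ext <;> simp
  map_add' a b := by ext <;> simp

def dqc1 (q : DQ) : DC := ⟨qc1 q.fst, qc1 q.snd⟩

def dqc2 (q : DQ) : DC := ⟨qc2 q.fst, qc2 q.snd⟩

theorem Jmap_eq_fromBlocks {m n : ℕ} (Q : Matrix (Fin m) (Fin n) DQ) :
    Jmap Q = fromBlocks (Q.map dqc1) (Q.map dqc2) (-(Q.map dqc2).map dcconjHom)
      ((Q.map dqc1).map dcconjHom) := by
  ext (i | i) (j | j) <;> rfl

theorem Fvec_eq_sumElim {n : ℕ} (v : Fin n → DQ) :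
    Fvec v = Sum.elim (dqc1 ∘ v) (-(dcconjHom ∘ dqc2 ∘ v)) := by
  ext (i | i) <;> rfl

theorem Gvec_eq_sumElim {n : ℕ} (v : Fin n → DQ) :
    Gvec v = Sum.elim (dqc2 ∘ v) (dcconjHom ∘ dqc1 ∘ v) := by
  ext (i | i) <;> rfl

theorem Gvec_eq_conjSwap_Fvec {n : ℕ} (v : Fin n → DQ) :
    Gvec v = conjSwap dcconjHom (Fvec v) := by
  rw [Fvec_eq_sumElim, Gvec_eq_sumElim, conjSwap_sumElim_neg _ dcconj_involutive]

theorem stmt14 {m n : ℕ} (Q : Matrix (Fin m) (Fin n) DQ) (v : Fin n → DQ) (u : Fin m → DQ)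
    (h : (Jmap Q).mulVec (Fvec v) = Fvec u) :
    (Jmap Q).mulVec (Gvec v) = Gvec u := by
  rw [Gvec_eq_conjSwap_Fvec, Gvec_eq_conjSwap_Fvec, Jmap_eq_fromBlocks,
    fromBlocks_mulVec_conjSwap _ dcconj_involutive, ← Jmap_eq_fromBlocks, h]
end
end
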